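/- Let K and T be inverse semigroups, let T act on K by endomorphisms satisfying (AFR), let 𝕊 = K⋊T be the full restricted semidirect product with Θ the congruence induced by the second projection, and for t ∈ T let ω_[t] ∈ Ω(𝕊,Θ) be the bitranslation given by ω_[t](x,u) = (t·x, tu) and (x,u)ω_[t] = (ran(ut)·x, ut). Then the map ω_[·]: T → Ω(𝕊,Θ), t ↦ ω_[t], is an injective homomorphism, and ω_[t] Ω(Θ) π_{(a,t)} for every (a,t) ∈ 𝕊, where π_{(a,t)} is the inner bitranslation of 𝕊 induced by (a,t). -/
import Mathlib


/-- An inverse semigroup: a semigroup in which every element `a` has a unique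
inverse `a⁻¹` satisfying `a * a⁻¹ * a = a` and `a⁻¹ * a * a⁻¹ = a⁻¹`. -/
class InverseSemigroup (S : Type*) extends Semigroup S, Inv S where
  mul_inv_mul : ∀ a : S, a * a⁻¹ * a = a
  inv_mul_inv : ∀ a : S, a⁻¹ * a * a⁻¹ = a⁻¹
  inv_unique : ∀ {a b : S}, a * b * a = a → b * a * b = b → b = a⁻¹

/-- The set of idempotents `E(T)` of a `Mul`-structure. -/
def idemSet (T : Type*) [Mul T] : Set T := {e | e * e = e}

/-- `ran t = t * t⁻¹`. -/
def iran {T : Type*} [Mul T] [Inv T] (t : T) : T := t * t⁻¹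

/-- `dom t = t⁻¹ * t`. -/
def idom {T : Type*} [Mul T] [Inv T] (t : T) : T := t⁻¹ * t

/-- The natural partial order: `a ≤ b` iff `a = e * b` for some idempotent `e`. -/
def nle {T : Type*} [Mul T] (a b : T) : Prop := ∃ e ∈ idemSet T, a = e * b

/-- `b` is an inverse of `a`. -/
def IsInvPair {T : Type*} [Mul T] (a b : T) : Prop := a * b * a = a ∧ b * a * b = b

/-- An action of `T` on `K` by endomorphisms. -/
def IsAction {K T : Type*} [Mul K] [Mul T] (act : T → K → K) : Prop :=
  (∀ t a b, act t (a * b) = act t a * act t b) ∧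
  (∀ t u a, act (t * u) a = act t (act u a))

/-- `ε : K → T` is a (surjective) homomorphism from `K` onto the semilattice
of idempotents `E(T)` of `T`. -/
def IsSurjHomOntoE {K T : Type*} [Mul K] [Mul T] (ε : K → T) : Prop :=
  (∀ a b, ε (a * b) = ε a * ε b) ∧ (∀ a, ε a ∈ idemSet T) ∧
  (∀ e ∈ idemSet T, ∃ a, ε a = e)

/-- Condition (AFR): `e · a = a` iff `ε a ≤ e`, for all `a ∈ K`, `e ∈ E(T)`. -/
def AFR {K T : Type*} [Mul K] [Mul T] (act : T → K → K) (ε : K → T) : Prop :=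
  ∀ (a : K), ∀ e ∈ idemSet T, (act e a = a ↔ nle (ε a) e)

/-- The carrier of the λ-semidirect product `K ⋊^λ T`:
`{(a,t) ∈ K × T : a = ran(t) · a}`. -/
def lsdSet {K T : Type*} [Mul K] [Mul T] [Inv T] (act : T → K → K) :
    Set (K × T) := {p | act (iran p.2) p.1 = p.1}

/-- The multiplication of the λ-semidirect product:
`(a,t)(b,u) = ((ran(tu) · a)(t · b), tu)`. -/
def lsdMul {K T : Type*} [Mul K] [Mul T] [Inv T] (act : T → K → K)
    (p q : K × T) : K × T :=
  (act (iran (p.2 * q.2)) p.1 * act p.2 q.1, p.2 * q.2)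

/-- The carrier of the full restricted semidirect product `K ⋊ T`:
`{(a,t) ∈ K × T : ε a = ran t}`. -/
def rsdSet {K T : Type*} [Mul T] [Inv T] (ε : K → T) : Set (K × T) :=
  {p | ε p.1 = iran p.2}

/-- The multiplication of the full restricted semidirect product:
`(a,t)(b,u) = (a (t · b), tu)`. -/
def rsdMul {K T : Type*} [Mul K] [Mul T] (act : T → K → K)
    (p q : K × T) : K × T :=
  (p.1 * act p.2 q.1, p.2 * q.2)

/-- The Kernel of the congruence `ker π₂` (equality of second components) on a
subset `C` of a product, with multiplication `m`: all elements of `C` that are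
`(ker π₂)`-related to an idempotent of `C`. -/
def pi2Kernel {X Y : Type*} (m : X × Y → X × Y → X × Y) (C : Set (X × Y)) :
    Set (X × Y) :=
  {p | p ∈ C ∧ ∃ q ∈ C, m q q = q ∧ q.2 = p.2}

/-- `(l, r)` is a bitranslation of the subsemigroup on the carrier `C` (with
multiplication `m`): `l` is a left translation, `r` is a right translation
(both mapping `C` into `C`), and they are linked. -/
def IsBitransOn {X : Type*} (m : X → X → X) (C : Set X) (l r : X → X) : Prop :=
  (∀ s ∈ C, l s ∈ C ∧ r s ∈ C) ∧
  (∀ s ∈ C, ∀ t ∈ C,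
      l (m s t) = m (l s) t ∧ r (m s t) = m s (r t) ∧ m s (l t) = m (r s) t)

/-- The pair `(l, r)` respects the congruence `Θ = ker π₂` (equality of second
components) on `C`. -/
def RespectsPi2 {K T : Type*} (C : Set (K × T)) (l r : K × T → K × T) : Prop :=
  ∀ p ∈ C, ∀ q ∈ C, p.2 = q.2 → (l p).2 = (l q).2 ∧ (r p).2 = (r q).2

/-- The bitranslation induced by `(l, r)` on the quotient `𝕊/Θ ≅ T` is the
inner bitranslation of `T` induced by `t`. -/
def InducesInnerPi2 {K T : Type*} [Mul T] (C : Set (K × T))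
    (l r : K × T → K × T) (t : T) : Prop :=
  ∀ p ∈ C, (l p).2 = t * p.2 ∧ (r p).2 = p.2 * t

/-- Membership in `Ω(𝕊, Θ)`: a bitranslation of `𝕊` respecting `Θ` whose
induced bitranslation on `𝕊/Θ ≅ T` is inner. -/
def MemOmegaPi2 {K T : Type*} [Mul T] (m : K × T → K × T → K × T)
    (C : Set (K × T)) (l r : K × T → K × T) : Prop :=
  IsBitransOn m C l r ∧ RespectsPi2 C l r ∧ ∃ t : T, InducesInnerPi2 C l r t

/-- The left translation part of the bioperator `ω_[t]` on `𝕊 = K ⋊ T`: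
`ω_[t](x,u) = (t·x, tu)`. -/
def Ltr {K T : Type*} [Mul T] (act : T → K → K) (t : T) :
    K × T → K × T :=
  fun p => (act t p.1, t * p.2)

/-- The right translation part of the bioperator `ω_[t]` on `𝕊 = K ⋊ T`:
`(x,u)ω_[t] = (ran(ut)·x, ut)`. -/
def Rtr {K T : Type*} [Mul T] [Inv T] (act : T → K → K) (t : T) :
    K × T → K × T :=
  fun p => (act (iran (p.2 * t)) p.1, p.2 * t)

section ISLemmas

variable {S : Type*} [InverseSemigroup S]

lemma is_mii (a : S) : a * a⁻¹ * a = a := InverseSemigroup.mul_inv_mul a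
lemma is_imi (a : S) : a⁻¹ * a * a⁻¹ = a⁻¹ := InverseSemigroup.inv_mul_inv a

lemma is_inv_inv (a : S) : a⁻¹⁻¹ = a :=
  (InverseSemigroup.inv_unique (is_imi a) (is_mii a)).symm

lemma idem_inv {e : S} (he : e * e = e) : e⁻¹ = e :=
  (InverseSemigroup.inv_unique (by rw [he, he]) (by rw [he, he])).symm

lemma is_mii' (a : S) : a * (a⁻¹ * a) = a := by rw [← mul_assoc, is_mii]
lemma is_imi' (a : S) : a⁻¹ * (a * a⁻¹) = a⁻¹ := by rw [← mul_assoc, is_imi]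

lemma ran_idem (a : S) : (a * a⁻¹) * (a * a⁻¹) = a * a⁻¹ := by
  rw [← mul_assoc, is_mii]

lemma dom_idem (a : S) : (a⁻¹ * a) * (a⁻¹ * a) = a⁻¹ * a := by
  rw [← mul_assoc, is_imi]

lemma idem_sq {a b : S} (ha : a * a = a) (hb : b * b = b) :
    (a * b) * (a * b) = a * b := by
  have h : (a*b)⁻¹*(a*(b*((a*b)⁻¹*a))) = (a*b)⁻¹*a := by
    have h0 : ((a*b)⁻¹*(a*b)*(a*b)⁻¹)*a = (a*b)⁻¹*a := by rw [is_imi]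
    simp only [mul_assoc] at h0
    exact h0
  have h1 : (a*b)*(b*((a*b)⁻¹*a))*(a*b) = a*b := by
    calc (a*b)*(b*((a*b)⁻¹*a))*(a*b)
        = a*(b*(b*((a*b)⁻¹*(a*(a*b))))) := by simp only [mul_assoc]
      _ = a*(b*((a*b)⁻¹*(a*b))) := by
          rw [← mul_assoc b b, hb, ← mul_assoc a a, ha]
      _ = a*b := by
          have hm := is_mii (a*b)
          simp only [mul_assoc] at hm
          exact hm
  have h2 : (b*((a*b)⁻¹*a))*(a*b)*(b*((a*b)⁻¹*a)) = b*((a*b)⁻¹*a) := by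
    calc (b*((a*b)⁻¹*a))*(a*b)*(b*((a*b)⁻¹*a))
        = b*((a*b)⁻¹*(a*(a*(b*(b*((a*b)⁻¹*a)))))) := by simp only [mul_assoc]
      _ = b*((a*b)⁻¹*(a*(b*((a*b)⁻¹*a)))) := by
          rw [← mul_assoc a a, ha, ← mul_assoc b b, hb]
      _ = b*((a*b)⁻¹*a) := by rw [h]
  have hx : b*((a*b)⁻¹*a) = (a*b)⁻¹ := InverseSemigroup.inv_unique h1 h2
  have hxx : (a*b)⁻¹*(a*b)⁻¹ = (a*b)⁻¹ := by
    conv_lhs => rw [← hx]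
    calc (b*((a*b)⁻¹*a))*(b*((a*b)⁻¹*a))
        = b*((a*b)⁻¹*(a*(b*((a*b)⁻¹*a)))) := by simp only [mul_assoc]
      _ = b*((a*b)⁻¹*a) := by rw [h]
      _ = (a*b)⁻¹ := hx
  have hinv : (a*b)⁻¹ = a*b := ((idem_inv hxx).symm).trans (is_inv_inv (a*b))
  rw [← hinv]
  exact hxx

lemma idem_comm {e f : S} (he : e * e = e) (hf : f * f = f) :
    e * f = f * e := by
  have hef := idem_sq he hf
  have hfe := idem_sq hf he
  have h1 : (e*f)*(f*e)*(e*f) = e*f := by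
    calc (e*f)*(f*e)*(e*f) = e*(f*(f*(e*(e*f)))) := by simp only [mul_assoc]
      _ = e*(f*(e*f)) := by rw [← mul_assoc f f, hf, ← mul_assoc e e, he]
      _ = (e*f)*(e*f) := by simp only [mul_assoc]
      _ = e*f := hef
  have h2 : (f*e)*(e*f)*(f*e) = f*e := by
    calc (f*e)*(e*f)*(f*e) = f*(e*(e*(f*(f*e)))) := by simp only [mul_assoc]
      _ = f*(e*(f*e)) := by rw [← mul_assoc e e, he, ← mul_assoc f f, hf]
      _ = (f*e)*(f*e) := by simp only [mul_assoc]
      _ = f*e := hfe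
  have h3 : f*e = (e*f)⁻¹ := InverseSemigroup.inv_unique h1 h2
  rw [idem_inv hef] at h3
  exact h3.symm

lemma is_mul_inv_rev (a b : S) : (a*b)⁻¹ = b⁻¹ * a⁻¹ := by
  have h1 : (a*b)*(b⁻¹*a⁻¹)*(a*b) = a*b := by
    calc (a*b)*(b⁻¹*a⁻¹)*(a*b) = a*((b*b⁻¹)*((a⁻¹*a)*b)) := by
          simp only [mul_assoc]
      _ = a*((a⁻¹*a)*((b*b⁻¹)*b)) := by
          rw [← mul_assoc (b*b⁻¹), idem_comm (ran_idem b) (dom_idem a),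
            mul_assoc]
      _ = a*b := by rw [is_mii b, ← mul_assoc, ← mul_assoc, is_mii a]
  have h2 : (b⁻¹*a⁻¹)*(a*b)*(b⁻¹*a⁻¹) = b⁻¹*a⁻¹ := by
    calc (b⁻¹*a⁻¹)*(a*b)*(b⁻¹*a⁻¹) = b⁻¹*((a⁻¹*a)*((b*b⁻¹)*a⁻¹)) := by
          simp only [mul_assoc]
      _ = b⁻¹*((b*b⁻¹)*((a⁻¹*a)*a⁻¹)) := by
          rw [← mul_assoc (a⁻¹*a), idem_comm (dom_idem a) (ran_idem b),
            mul_assoc]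
      _ = b⁻¹*a⁻¹ := by rw [is_imi a, ← mul_assoc, ← mul_assoc, is_imi b]
  exact (InverseSemigroup.inv_unique h1 h2).symm

lemma conj_idem (t : S) {g : S} (hg : g * g = g) :
    (t*(g*t⁻¹)) * (t*(g*t⁻¹)) = t*(g*t⁻¹) := by
  calc (t*(g*t⁻¹))*(t*(g*t⁻¹)) = t*(g*((t⁻¹*t)*(g*t⁻¹))) := by
        simp only [mul_assoc]
    _ = t*(g*(g*((t⁻¹*t)*t⁻¹))) := by
        rw [← mul_assoc (t⁻¹*t), idem_comm (dom_idem t) hg, mul_assoc]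
    _ = t*(g*t⁻¹) := by rw [is_imi t, ← mul_assoc g, hg]

lemma conj_absorb (t : S) {g : S} (hg : g * g = g) :
    (t*(g*t⁻¹)) * t = t * g := by
  calc (t*(g*t⁻¹))*t = t*(g*(t⁻¹*t)) := by simp only [mul_assoc]
    _ = t*((t⁻¹*t)*g) := by rw [idem_comm hg (dom_idem t)]
    _ = t*g := by rw [← mul_assoc, is_mii' t]

lemma iran_idem (x : S) : iran x * iran x = iran x := ran_idem x

lemma iran_conj (t u : S) : iran (t*u) = t*(iran u*t⁻¹) := by
  show (t*u)*(t*u)⁻¹ = t*((u*u⁻¹)*t⁻¹)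
  rw [is_mul_inv_rev]
  simp only [mul_assoc]

lemma iran_mul_swap (x y : S) : iran (x*y) * x = x * iran y := by
  show ((x*y)*(x*y)⁻¹)*x = x*(y*y⁻¹)
  rw [is_mul_inv_rev]
  calc ((x*y)*(y⁻¹*x⁻¹))*x = x*((y*y⁻¹)*(x⁻¹*x)) := by simp only [mul_assoc]
    _ = x*((x⁻¹*x)*(y*y⁻¹)) := by rw [idem_comm (ran_idem y) (dom_idem x)]
    _ = x*(y*y⁻¹) := by rw [← mul_assoc, is_mii' x]

lemma iran_mul_absorb (x y : S) : iran (x*y) * iran x = iran (x*y) := by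
  show ((x*y)*(x*y)⁻¹)*(x*x⁻¹) = (x*y)*(x*y)⁻¹
  rw [is_mul_inv_rev]
  calc ((x*y)*(y⁻¹*x⁻¹))*(x*x⁻¹)
      = x*((y*y⁻¹)*((x⁻¹*x)*x⁻¹)) := by simp only [mul_assoc]
    _ = x*((x⁻¹*x)*((y*y⁻¹)*x⁻¹)) := by
        rw [← mul_assoc (y*y⁻¹), idem_comm (ran_idem y) (dom_idem x),
          mul_assoc]
    _ = (x*y)*(y⁻¹*x⁻¹) := by
        rw [← mul_assoc x, is_mii' x]; simp only [mul_assoc]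

lemma iran_mul_self (x : S) : iran x * x = x := is_mii x

lemma nle_mul_right {x X : S} (hX : X * X = X) (h : nle x X) : x * X = x := by
  obtain ⟨g, hg, hgx⟩ := h
  rw [hgx, mul_assoc, hX]

lemma nle_mul_left {x X : S} (hX : X * X = X) (h : nle x X) : X * x = x := by
  obtain ⟨g, hg, hgx⟩ := h
  have hg' : g * g = g := hg
  rw [hgx, ← mul_assoc, idem_comm hX hg', mul_assoc, hX]

end ISLemmas

section ActLemmas

variable {K T : Type*} [InverseSemigroup K] [InverseSemigroup T]
  {act : T → K → K} {ε : K → T}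

lemma eps_fix (hε : IsSurjHomOntoE ε) (hafr : AFR act ε) (a : K) :
    act (ε a) a = a :=
  (hafr a (ε a) (hε.2.1 a)).mpr ⟨ε a, hε.2.1 a,
    ((hε.2.1 a : ε a * ε a = ε a)).symm⟩

lemma eps_act_nle (hact : IsAction act) (hε : IsSurjHomOntoE ε)
    (hafr : AFR act ε) (t : T) (a : K) :
    nle (ε (act t a)) (t*(ε a*t⁻¹)) := by
  have haa : ε a * ε a = ε a := hε.2.1 a
  have hX : (t*(ε a*t⁻¹))*(t*(ε a*t⁻¹)) = t*(ε a*t⁻¹) := conj_idem t haa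
  refine (hafr (act t a) _ hX).mp ?_
  rw [← hact.2, conj_absorb t haa, hact.2, eps_fix hε hafr a]

lemma eps_act_idem (hact : IsAction act) (hε : IsSurjHomOntoE ε)
    (hafr : AFR act ε) {e : T} (he : e * e = e) (a : K) :
    ε (act e a) = e * ε a := by
  have haa : ε a * ε a = ε a := hε.2.1 a
  have heea : (e*ε a)*(e*ε a) = e*ε a := idem_sq he haa
  have h1 : nle (ε (act e a)) (e*(ε a*e⁻¹)) := eps_act_nle hact hε hafr e a
  have hsimp : e*(ε a*e⁻¹) = e*ε a := by
    rw [idem_inv he, idem_comm haa he, ← mul_assoc, he]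
  rw [hsimp] at h1
  have hXf : (e*ε a) * ε (act e a) = ε (act e a) := nle_mul_left heea h1
  obtain ⟨c, hc⟩ := hε.2.2 (e*ε a) heea
  have hca : ε (c*a) = e*ε a := by rw [hε.1, hc, mul_assoc, haa]
  have heca : act e (c*a) = c*a :=
    (hafr (c*a) e he).mpr ⟨ε (c*a), hε.2.1 _, by
      rw [hca, mul_assoc, idem_comm haa he, ← mul_assoc, he]⟩
  have hec : act e c = c :=
    (hafr c e he).mpr ⟨ε c, hε.2.1 c, by
      rw [hc, mul_assoc, idem_comm haa he, ← mul_assoc, he]⟩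
  rw [hact.1, hec] at heca
  have h2 := congrArg ε heca
  rw [hε.1, hε.1, hc] at h2
  rw [hXf] at h2
  rw [mul_assoc, haa] at h2
  exact h2

lemma eps_act (hact : IsAction act) (hε : IsSurjHomOntoE ε)
    (hafr : AFR act ε) (t : T) (a : K) :
    ε (act t a) = t*(ε a*t⁻¹) := by
  have haa : ε a * ε a = ε a := hε.2.1 a
  have hf : ε (act t a) * ε (act t a) = ε (act t a) := hε.2.1 _
  have h1 := eps_act_nle hact hε hafr t a
  have hX : (t*(ε a*t⁻¹))*(t*(ε a*t⁻¹)) = t*(ε a*t⁻¹) := conj_idem t haa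
  have hfX : ε (act t a)*(t*(ε a*t⁻¹)) = ε (act t a) := nle_mul_right hX h1
  have hXtt : (t*(ε a*t⁻¹))*(t*t⁻¹) = t*(ε a*t⁻¹) := by
    calc (t*(ε a*t⁻¹))*(t*t⁻¹) = t*(ε a*(t⁻¹*(t*t⁻¹))) := by
          simp only [mul_assoc]
      _ = t*(ε a*t⁻¹) := by rw [is_imi' t]
  have hftt : ε (act t a)*(t*t⁻¹) = ε (act t a) := by
    calc ε (act t a)*(t*t⁻¹)
        = (ε (act t a)*(t*(ε a*t⁻¹)))*(t*t⁻¹) := by rw [hfX]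
      _ = ε (act t a)*((t*(ε a*t⁻¹))*(t*t⁻¹)) := by rw [mul_assoc]
      _ = ε (act t a)*(t*(ε a*t⁻¹)) := by rw [hXtt]
      _ = ε (act t a) := hfX
  have httf : (t*t⁻¹)*ε (act t a) = ε (act t a) := by
    rw [idem_comm (ran_idem t) hf]; exact hftt
  have hh : (t⁻¹*(ε (act t a)*t))*(t⁻¹*(ε (act t a)*t))
      = t⁻¹*(ε (act t a)*t) := by
    calc (t⁻¹*(ε (act t a)*t))*(t⁻¹*(ε (act t a)*t))
        = t⁻¹*(ε (act t a)*((t*t⁻¹)*(ε (act t a)*t))) := by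
          simp only [mul_assoc]
      _ = t⁻¹*(ε (act t a)*(ε (act t a)*t)) := by
          rw [← mul_assoc (t*t⁻¹), httf]
      _ = t⁻¹*(ε (act t a)*t) := by rw [← mul_assoc (ε (act t a)), hf]
  have hfix : act (ε (act t a)) (act t a) = act t a :=
    (hafr (act t a) (ε (act t a)) (hε.2.1 _)).mpr
      ⟨ε (act t a), hε.2.1 _, hf.symm⟩
  have hha : act (t⁻¹*(ε (act t a)*t)) a = act (t⁻¹*t) a := by
    rw [hact.2, hact.2, hfix, ← hact.2]
  have e1 := eps_act_idem hact hε hafr hh a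
  have e2 := eps_act_idem hact hε hafr (dom_idem t) a
  rw [hha, e2] at e1
  have e3 : t*(((t⁻¹*t)*ε a)*t⁻¹) = t*(((t⁻¹*(ε (act t a)*t))*ε a)*t⁻¹) := by
    rw [e1]
  have hlhs : t*(((t⁻¹*t)*ε a)*t⁻¹) = t*(ε a*t⁻¹) := by
    calc t*(((t⁻¹*t)*ε a)*t⁻¹) = (t*(t⁻¹*t))*(ε a*t⁻¹) := by
          simp only [mul_assoc]
      _ = t*(ε a*t⁻¹) := by rw [is_mii' t]
  have hrhs : t*(((t⁻¹*(ε (act t a)*t))*ε a)*t⁻¹) = ε (act t a) := by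
    calc t*(((t⁻¹*(ε (act t a)*t))*ε a)*t⁻¹)
        = ((t*t⁻¹)*ε (act t a))*(t*(ε a*t⁻¹)) := by simp only [mul_assoc]
      _ = ε (act t a)*(t*(ε a*t⁻¹)) := by rw [httf]
      _ = ε (act t a) := hfX
  rw [hlhs, hrhs] at e3
  exact e3.symm

lemma key_absorb (hact : IsAction act) (hε : IsSurjHomOntoE ε)
    (hafr : AFR act ε) {E : T} (hE : E * E = E) (a c : K)
    (hc : act E c = c) : act E a * c = a * c := by
  have h1 : ε c * E = ε c := nle_mul_right hE ((hafr c E hE).mp hc)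
  have h2 : act E (a*c) = a*c :=
    (hafr (a*c) E hE).mpr ⟨ε (a*c), hε.2.1 _, by rw [hε.1, mul_assoc, h1]⟩
  calc act E a * c = act E a * act E c := by rw [hc]
    _ = act E (a*c) := (hact.1 E a c).symm
    _ = a*c := h2

end ActLemmas

/-- Let `T` act on `K` by endomorphisms satisfying (AFR), let
`𝕊 = K ⋊ T` with `Θ = ker π₂`, and let `ω_[t]` be the bitranslation given by
`ω_[t](x,u) = (t·x, tu)`, `(x,u)ω_[t] = (ran(ut)·x, ut)`.  Then the map
`ω_[·] : T → Ω(𝕊, Θ)`, `t ↦ ω_[t]`, is an injective homomorphism, and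
`ω_[t] Ω(Θ) π_{(a,t)}` for every `(a,t) ∈ 𝕊`, where `π_{(a,t)}` is the inner
bitranslation of `𝕊` induced by `(a,t)`. -/
theorem omega_map_injective_hom {K T : Type*} [InverseSemigroup K]
    [InverseSemigroup T] (act : T → K → K) (hact : IsAction act)
    (ε : K → T) (hε : IsSurjHomOntoE ε) (hafr : AFR act ε) :
    -- `ω_[t] ∈ Ω(𝕊, Θ)` for every `t`
    (∀ t : T, MemOmegaPi2 (rsdMul act) (rsdSet ε) (Ltr act t) (Rtr act t)) ∧
    -- `ω_[·]` is a homomorphism: `ω_[t] ω_[u] = ω_[tu]` (as bitranslations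
    -- of `𝕊`; the left translations compose as `ω(ω's)`, the right ones as
    -- `(sω)ω'`)
    (∀ t u : T, ∀ p ∈ rsdSet ε,
        Ltr act t (Ltr act u p) = Ltr act (t * u) p ∧
        Rtr act u (Rtr act t p) = Rtr act (t * u) p) ∧
    -- `ω_[·]` is injective
    (∀ t u : T,
        (∀ p ∈ rsdSet ε, Ltr act t p = Ltr act u p ∧ Rtr act t p = Rtr act u p)
        → t = u) ∧
    -- `ω_[t] Ω(Θ) π_{(a,t)}` for every `(a,t) ∈ 𝕊`
    (∀ q ∈ rsdSet ε, ∀ p ∈ rsdSet ε,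
        (Ltr act q.2 p).2 = (rsdMul act q p).2 ∧
        (Rtr act q.2 p).2 = (rsdMul act p q).2) := by
  refine ⟨?_, ?_, ?_, ?_⟩
  · -- membership in Ω(𝕊, Θ)
    intro t
    refine ⟨⟨?_, ?_⟩, ?_, ⟨t, fun p _ => ⟨rfl, rfl⟩⟩⟩
    · -- l, r map C into C
      rintro ⟨a, u⟩ hs
      have hsa : ε a = iran u := hs
      constructor
      · show ε (act t a) = iran (t*u)
        rw [eps_act hact hε hafr, hsa]
        exact (iran_conj t u).symm
      · show ε (act (iran (u*t)) a) = iran (u*t)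
        rw [eps_act_idem hact hε hafr (iran_idem (u*t)) a, hsa]
        exact iran_mul_absorb u t
    · -- translation identities
      rintro ⟨a, u⟩ _ ⟨b, v⟩ _
      refine ⟨?_, ?_, ?_⟩
      · -- l(ss') = (ls)s'
        refine Prod.ext ?_ ?_
        · show act t (a * act u b) = act t a * act (t*u) b
          rw [hact.1, ← hact.2]
        · exact (mul_assoc t u v).symm
      · -- r(ss') = s(rs')
        refine Prod.ext ?_ ?_
        · show act (iran ((u*v)*t)) (a * act u b)
            = a * act u (act (iran (v*t)) b)
          have hEu : iran ((u*v)*t)*u = u*iran (v*t) := by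
            rw [mul_assoc]; exact iran_mul_swap u (v*t)
          have hEE : iran ((u*v)*t)*(u*iran (v*t)) = u*iran (v*t) := by
            rw [← mul_assoc, hEu, mul_assoc, iran_idem]
          have hc : act (iran ((u*v)*t)) (act (u*iran (v*t)) b)
              = act (u*iran (v*t)) b := by
            rw [← hact.2, hEE]
          calc act (iran ((u*v)*t)) (a * act u b)
              = act (iran ((u*v)*t)) a * act (iran ((u*v)*t)) (act u b) :=
                hact.1 _ _ _
            _ = act (iran ((u*v)*t)) a * act (iran ((u*v)*t)*u) b := by
                rw [← hact.2]
            _ = act (iran ((u*v)*t)) a * act (u*iran (v*t)) b := by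
                rw [hEu]
            _ = a * act (u*iran (v*t)) b :=
                key_absorb hact hε hafr (iran_idem ((u*v)*t)) a _ hc
            _ = a * act u (act (iran (v*t)) b) := by rw [hact.2]
        · exact mul_assoc u v t
      · -- s(lt) = (rs)t
        refine Prod.ext ?_ ?_
        · show a * act u (act t b) = act (iran (u*t)) a * act (u*t) b
          have hc : act (iran (u*t)) (act (u*t) b) = act (u*t) b := by
            rw [← hact.2, iran_mul_self]
          calc a * act u (act t b) = a * act (u*t) b := by rw [← hact.2]
            _ = act (iran (u*t)) a * act (u*t) b :=
                (key_absorb hact hε hafr (iran_idem (u*t)) a _ hc).symm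
        · exact (mul_assoc u t v).symm
    · -- respects Θ
      intro p _ q _ hpq
      exact ⟨show t*p.2 = t*q.2 by rw [hpq],
        show p.2*t = q.2*t by rw [hpq]⟩
  · -- homomorphism
    intro t u p _
    constructor
    · refine Prod.ext ?_ ?_
      · exact (hact.2 t u p.1).symm
      · exact (mul_assoc t u p.2).symm
    · refine Prod.ext ?_ ?_
      · show act (iran ((p.2*t)*u)) (act (iran (p.2*t)) p.1)
          = act (iran (p.2*(t*u))) p.1
        rw [← hact.2, iran_mul_absorb, mul_assoc p.2 t u]
      · exact mul_assoc p.2 t u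
  · -- injectivity
    intro t u h
    obtain ⟨a1, ha1⟩ := hε.2.2 (iran t⁻¹) (iran_idem t⁻¹)
    obtain ⟨a2, ha2⟩ := hε.2.2 (iran u⁻¹) (iran_idem u⁻¹)
    have h1 := h (a1, t⁻¹) ha1
    have h2 := h (a2, u⁻¹) ha2
    have e2 : t⁻¹*t = t⁻¹*u := congrArg Prod.snd h1.2
    have e4 : u⁻¹*t = u⁻¹*u := congrArg Prod.snd h2.2
    have ht : t = (t*t⁻¹)*u := by
      have h' : t*(t⁻¹*t) = t*(t⁻¹*u) := by rw [e2]
      rw [is_mii' t, ← mul_assoc] at h'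
      exact h'
    have hu : u = (u*u⁻¹)*t := by
      have h' : u*(u⁻¹*t) = u*(u⁻¹*u) := by rw [e4]
      rw [is_mii' u, ← mul_assoc] at h'
      exact h'.symm
    have hee : (t*t⁻¹)*(u*u⁻¹) = t*t⁻¹ := by
      have h' : t*t⁻¹ = ((t*t⁻¹)*u)*((t*t⁻¹)*u)⁻¹ := by rw [← ht]
      rw [is_mul_inv_rev, idem_inv (ran_idem t)] at h'
      have h'' : ((t*t⁻¹)*u)*(u⁻¹*(t*t⁻¹)) = (t*t⁻¹)*(u*u⁻¹) := by
        calc ((t*t⁻¹)*u)*(u⁻¹*(t*t⁻¹))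
            = (t*t⁻¹)*((u*u⁻¹)*(t*t⁻¹)) := by simp only [mul_assoc]
          _ = (t*t⁻¹)*((t*t⁻¹)*(u*u⁻¹)) := by
              rw [idem_comm (ran_idem u) (ran_idem t)]
          _ = ((t*t⁻¹)*(t*t⁻¹))*(u*u⁻¹) := by rw [← mul_assoc]
          _ = (t*t⁻¹)*(u*u⁻¹) := by rw [ran_idem t]
      rw [h''] at h'
      exact h'.symm
    have hff : (u*u⁻¹)*(t*t⁻¹) = u*u⁻¹ := by
      have h' : u*u⁻¹ = ((u*u⁻¹)*t)*((u*u⁻¹)*t)⁻¹ := by rw [← hu]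
      rw [is_mul_inv_rev, idem_inv (ran_idem u)] at h'
      have h'' : ((u*u⁻¹)*t)*(t⁻¹*(u*u⁻¹)) = (u*u⁻¹)*(t*t⁻¹) := by
        calc ((u*u⁻¹)*t)*(t⁻¹*(u*u⁻¹))
            = (u*u⁻¹)*((t*t⁻¹)*(u*u⁻¹)) := by simp only [mul_assoc]
          _ = (u*u⁻¹)*((u*u⁻¹)*(t*t⁻¹)) := by
              rw [idem_comm (ran_idem t) (ran_idem u)]
          _ = ((u*u⁻¹)*(u*u⁻¹))*(t*t⁻¹) := by rw [← mul_assoc]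
          _ = (u*u⁻¹)*(t*t⁻¹) := by rw [ran_idem u]
      rw [h''] at h'
      exact h'.symm
    have hef : t*t⁻¹ = u*u⁻¹ := by
      rw [← hee, idem_comm (ran_idem t) (ran_idem u), hff]
    rw [hef, is_mii u] at ht
    exact ht
  · -- ω_[t] Ω(Θ) π_{(a,t)}
    intro q _ p _
    exact ⟨rfl, rfl⟩
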